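/- Let Ω ⊆ ℝ^N (N ≥ 2) be a nonempty connected open set and let u : ℝ^N → ℝ^N be twice continuously differentiable on Ω. Suppose the symmetric part of the derivative of u vanishes on Ω, i.e., for every x ∈ Ω the matrix Du(x) + Du(x)ᵀ = 0 (equivalently, the total derivative of u at each point of Ω is an antisymmetric linear map). Then u is an infinitesimal rigid motion on Ω: there exist an antisymmetric N×N real matrix A and a vector b ∈ ℝ^N such that u(x) = A x + b for all x ∈ Ω. -/

import Mathlib

/-!
The second derivative `∂ₖ∂ⱼuᵢ` is symmetric in `k, j` (Schwarz) and, by differentiating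
`∂ⱼuᵢ + ∂ᵢuⱼ = 0`, antisymmetric in `j, i`. A tensor with these two symmetries vanishes, so `Du`
is constant on the connected set `Ω`, equal to an antisymmetric `A`, and then `u - A` is constant.
-/

open Matrix Filter Topology

theorem eq_zero_of_symm_of_antisymm {R ι : Type*} [NonAssocRing R] [NoZeroDivisors R]
    [CharZero R] {T : ι → ι → ι → R} (hsymm : ∀ a b c, T a b c = T b a c)
    (hanti : ∀ a b c, T a b c = -T a c b) (a b c : ι) : T a b c = 0 := by
  rw [← CharZero.neg_eq_self_iff]
  calc -T a b c = -T b a c := by rw [hsymm]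
    _ = T b c a := by rw [hanti b a c, neg_neg]
    _ = T c b a := hsymm ..
    _ = -T c a b := hanti ..
    _ = -T a c b := by rw [hsymm]
    _ = T a b c := (hanti a b c).symm

theorem HasFDerivAt.clm_comp_eq_zero_of_eventually_eq_zero {𝕜 E F G : Type*}
    [NontriviallyNormedField 𝕜] [NormedAddCommGroup E] [NormedSpace 𝕜 E]
    [NormedAddCommGroup F] [NormedSpace 𝕜 F] [NormedAddCommGroup G] [NormedSpace 𝕜 G]
    {g : E → F} {g' : E →L[𝕜] F} {x : E} (hg : HasFDerivAt g g' x) (Φ : F →L[𝕜] G)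
    (h : ∀ᶠ y in 𝓝 x, Φ (g y) = 0) : Φ ∘L g' = 0 :=
  (Φ.hasFDerivAt.comp x hg).unique ((hasFDerivAt_const 0 x).congr_of_eventuallyEq h)

namespace ContinuousLinearMap

variable {ι : Type*} [DecidableEq ι]

def IsSkew (L : (ι → ℝ) →L[ℝ] (ι → ℝ)) : Prop :=
  ∀ i j, L (Pi.single j 1) i + L (Pi.single i 1) j = 0

theorem IsSkew.transpose_toMatrix' [Fintype ι] {L : (ι → ℝ) →L[ℝ] (ι → ℝ)} (hL : L.IsSkew) :
    (LinearMap.toMatrix' (L : (ι → ℝ) →ₗ[ℝ] (ι → ℝ)))ᵀ = -LinearMap.toMatrix' L := by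
  ext i j
  simp only [transpose_apply, Matrix.neg_apply, LinearMap.toMatrix'_apply, coe_coe]
  exact eq_neg_of_add_eq_zero_left (hL j i)

theorem isSkew_of_hasFDerivAt [Fintype ι] {E : Type*} [NormedAddCommGroup E] [NormedSpace ℝ E]
    {g : E → (ι → ℝ) →L[ℝ] (ι → ℝ)} {g' : E →L[ℝ] (ι → ℝ) →L[ℝ] (ι → ℝ)} {x : E}
    (hg : HasFDerivAt g g' x) (hskew : ∀ᶠ y in 𝓝 x, (g y).IsSkew) (v : E) : (g' v).IsSkew := by
  intro i j
  let entry : ι → ι → ((ι → ℝ) →L[ℝ] (ι → ℝ)) →L[ℝ] ℝ := fun i j =>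
    proj i ∘L apply ℝ (ι → ℝ) (Pi.single j 1)
  have := hg.clm_comp_eq_zero_of_eventually_eq_zero (entry i j + entry j i)
    (hskew.mono fun y hy => hy i j)
  simpa [entry] using congr($this v)

theorem pi_ext_single [Finite ι] {𝕜 F : Type*} [Semiring 𝕜] [TopologicalSpace 𝕜] [AddCommMonoid F]
    [Module 𝕜 F] [TopologicalSpace F] {f g : (ι → 𝕜) →L[𝕜] F}
    (h : ∀ i, f (Pi.single i 1) = g (Pi.single i 1)) : f = g :=
  coe_injective (LinearMap.pi_ext' fun i => LinearMap.ext_ring (h i))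

end ContinuousLinearMap

open ContinuousLinearMap in
theorem fderiv_fderiv_eq_zero_of_isSkew {ι : Type*} [Fintype ι] [DecidableEq ι]
    {u : (ι → ℝ) → (ι → ℝ)} {x : ι → ℝ} (hu : ContDiffAt ℝ 2 u x)
    (hskew : ∀ᶠ y in 𝓝 x, (fderiv ℝ u y).IsSkew) : fderiv ℝ (fderiv ℝ u) x = 0 := by
  set H := fderiv ℝ (fderiv ℝ u) x
  have hsymm : ∀ v w, H v w = H w v := hu.isSymmSndFDerivAt (by simp)
  have hdiff : DifferentiableAt ℝ (fderiv ℝ u) x :=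
    (hu.fderiv_right (m := 1) (by norm_num)).differentiableAt one_ne_zero
  have hanti : ∀ v, (H v).IsSkew := isSkew_of_hasFDerivAt hdiff.hasFDerivAt hskew
  have hzero := eq_zero_of_symm_of_antisymm (T := fun k j i => H (Pi.single k 1) (Pi.single j 1) i)
    (fun k j i => congr_fun (hsymm _ _) i)
    (fun k j i => eq_neg_of_add_eq_zero_left (hanti (Pi.single k 1) i j))
  exact pi_ext_single fun k => pi_ext_single fun j => funext fun i => hzero k j i

theorem rigid_displacement_lemma_general
    {N : ℕ}
    (Ω : Set (Fin N → ℝ)) (hΩopen : IsOpen Ω) (hΩconn : IsConnected Ω)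
    (u : (Fin N → ℝ) → (Fin N → ℝ))
    (hu : ContDiffOn ℝ 2 u Ω)
    (hsym : ∀ x ∈ Ω, ∀ i j,
      fderiv ℝ u x (Pi.single j 1) i + fderiv ℝ u x (Pi.single i 1) j = 0) :
    ∃ (A : Matrix (Fin N) (Fin N) ℝ) (b : Fin N → ℝ),
      Aᵀ = -A ∧ ∀ x ∈ Ω, u x = A.mulVec x + b := by
  obtain ⟨x₀, hx₀⟩ := hΩconn.nonempty
  have hC2 : ∀ x ∈ Ω, ContDiffAt ℝ 2 u x := fun x hx => hu.contDiffAt (hΩopen.mem_nhds hx)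
  have hDu_diff : DifferentiableOn ℝ (fderiv ℝ u) Ω := fun x hx =>
    ((hC2 x hx).fderiv_right (m := 1) (by norm_num)).differentiableAt one_ne_zero
      |>.differentiableWithinAt
  obtain ⟨L, hL⟩ := hΩopen.exists_is_const_of_fderiv_eq_zero hΩconn.isPreconnected hDu_diff
    fun x hx => fderiv_fderiv_eq_zero_of_isSkew (hC2 x hx)
      (eventually_of_mem (hΩopen.mem_nhds hx) hsym)
  obtain ⟨b, hb⟩ := hΩopen.exists_eq_add_of_fderiv_eq hΩconn.isPreconnected
    (hu.differentiableOn (by norm_num)) L.differentiable.differentiableOn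
    fun x hx => by rw [hL x hx, L.fderiv]
  refine ⟨LinearMap.toMatrix' (L : (Fin N → ℝ) →ₗ[ℝ] (Fin N → ℝ)), b,
    (hL x₀ hx₀ ▸ hsym x₀ hx₀ : L.IsSkew).transpose_toMatrix', fun x hx => ?_⟩
  rw [hb hx, LinearMap.toMatrix'_mulVec, ContinuousLinearMap.coe_coe]

/-- (Rigid displacement lemma.) If `u` is twice continuously
differentiable on a nonempty connected open set `Ω ⊆ ℝ^N` (`N ≥ 2`) and the symmetric
part of its Jacobian `Du(x) + Du(x)ᵀ` vanishes on `Ω`, then `u` is an infinitesimal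
rigid motion on `Ω`: `u x = A x + b` with `A` antisymmetric. -/
theorem rigid_displacement_lemma
    {N : ℕ} (hN : 2 ≤ N)
    (Ω : Set (Fin N → ℝ)) (hΩopen : IsOpen Ω) (hΩconn : IsConnected Ω)
    (u : (Fin N → ℝ) → (Fin N → ℝ))
    (hu : ContDiffOn ℝ 2 u Ω)
    (hsym : ∀ x ∈ Ω, ∀ i j,
      fderiv ℝ u x (Pi.single j 1) i + fderiv ℝ u x (Pi.single i 1) j = 0) :
    ∃ (A : Matrix (Fin N) (Fin N) ℝ) (b : Fin N → ℝ),
      Aᵀ = -A ∧ ∀ x ∈ Ω, u x = A.mulVec x + b :=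
  rigid_displacement_lemma_general Ω hΩopen hΩconn u hu hsym
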